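/- Let c ≥ 7 and let F = Σ_{k ∈ ℤ/cℤ} x_k x_{k+1} x_{k+2}² in ℚ[x_i : i ∈ ℤ/cℤ]. The ℚ-linear span of the set of second partial derivatives {∂_i ∂_j F : i, j ∈ ℤ/cℤ} has dimension exactly 2c. (This is the statement h₂ = 2c for the h-vector (1, c, 2c, c, 1) of the Gorenstein quotient R = S/Ann(F).) -/
import Mathlib
open MvPolynomial
set_option linter.unusedSectionVars false
set_option linter.unusedVariables false

section
variable {c : ℕ} [NeZero c]

lemma zmod_cast_ne (hc : 7 ≤ c) {d : ℕ} (h0 : 0 < d) (hd : d < c) : (d : ZMod c) ≠ 0 := by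
  rw [Ne, ZMod.natCast_eq_zero_iff]
  exact fun h => absurd (Nat.le_of_dvd h0 h) (not_le.2 hd)

lemma ne_of_sub (hc : 7 ≤ c) (a b : ZMod c) (d : ℕ) (h : a - b = (d : ZMod c))
    (h0 : 0 < d) (hd : d < c) : a ≠ b := fun he => zmod_cast_ne hc h0 hd (by rw [← h, he, sub_self])

lemma term_pderiv_zero (hc : 7 ≤ c) (j k : ZMod c) (h0 : k ≠ j) (h1 : k + 1 ≠ j) (h2 : k + 2 ≠ j) :
    pderiv j (X k * X (k+1) * X (k+2) ^ 2 : MvPolynomial (ZMod c) ℚ) = 0 := by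
  simp [pderiv_mul, pderiv_pow, pderiv_X_of_ne, h0, h1, h2]

lemma first_deriv (hc : 7 ≤ c) (j : ZMod c) :
    pderiv j (∑ k : ZMod c, X k * X (k + 1) * X (k + 2) ^ 2 : MvPolynomial (ZMod c) ℚ) =
      X (j+1) * X (j+2) ^ 2 + X (j-1) * X (j+1) ^ 2 + 2 * (X (j-2) * X (j-1) * X j) := by
  have h12 : (j : ZMod c) - 2 ≠ j - 1 := (ne_of_sub hc (j-1) (j-2) 1 (by push_cast; ring) (by norm_num) (by omega)).symm
  have h10 : (j : ZMod c) - 1 ≠ j := (ne_of_sub hc j (j-1) 1 (by push_cast; ring) (by norm_num) (by omega)).symm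
  have h20 : (j : ZMod c) - 2 ≠ j := (ne_of_sub hc j (j-2) 2 (by push_cast; ring) (by norm_num) (by omega)).symm
  rw [map_sum]
  rw [← Finset.sum_subset (Finset.subset_univ (insert (j-2) (insert (j-1) ({j} : Finset (ZMod c)))))
      (fun k _ hk => term_pderiv_zero hc j k
        (fun h => hk (by simp [h]))
        (fun h => hk (by simp [show k = j - 1 from by rw [← h]; ring]))
        (fun h => hk (by simp [show k = j - 2 from by rw [← h]; ring])))]
  rw [Finset.sum_insert (by simp [h12, h20]), Finset.sum_insert (by simp [h10]),
      Finset.sum_singleton]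
  have e1 : j - 2 + 1 = j - 1 := by ring
  have e2 : j - 2 + 2 = j := by ring
  have e3 : j - 1 + 1 = j := by ring
  have e4 : j - 1 + 2 = j + 1 := by ring
  rw [e1, e2, e3, e4]
  have n1 : j - 2 ≠ j := h20
  have n2 : j - 1 ≠ j := h10
  have n3 : j + 1 ≠ j := ne_of_sub hc _ _ 1 (by push_cast; ring) (by norm_num) (by omega)
  have n4 : j + 2 ≠ j := ne_of_sub hc _ _ 2 (by push_cast; ring) (by norm_num) (by omega)
  simp only [pderiv_mul, pderiv_pow, pderiv_X_self, pderiv_X_of_ne n1, pderiv_X_of_ne n2,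
    pderiv_X_of_ne n3, pderiv_X_of_ne n4]
  ring

lemma pderiv_two_mul (i : ZMod c) (p : MvPolynomial (ZMod c) ℚ) :
    pderiv i (2 * p) = 2 * pderiv i p := by
  rw [show (2 : MvPolynomial (ZMod c) ℚ) = C 2 by rw [map_ofNat], pderiv_C_mul, map_ofNat]

lemma pderiv_two (i : ZMod c) : pderiv i (2 : MvPolynomial (ZMod c) ℚ) = 0 := by
  rw [show (2 : MvPolynomial (ZMod c) ℚ) = C 2 by rw [map_ofNat], pderiv_C]

/-- abbreviation for the first derivative -/
noncomputable def G (j : ZMod c) : MvPolynomial (ZMod c) ℚ :=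
  X (j+1) * X (j+2) ^ 2 + X (j-1) * X (j+1) ^ 2 + 2 * (X (j-2) * X (j-1) * X j)

lemma sec_p1 (hc : 7 ≤ c) (j : ZMod c) :
    pderiv (j+1) (G j) = X (j+2) ^ 2 + 2 * (X (j-1) * X (j+1)) := by
  have n1 : j + 2 ≠ j + 1 := ne_of_sub hc _ _ 1 (by push_cast; ring) (by norm_num) (by omega)
  have n2 : j - 1 ≠ j + 1 := (ne_of_sub hc (j+1) (j-1) 2 (by push_cast; ring) (by norm_num) (by omega)).symm
  have n3 : j - 2 ≠ j + 1 := (ne_of_sub hc (j+1) (j-2) 3 (by push_cast; ring) (by norm_num) (by omega)).symm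
  have n4 : j ≠ j + 1 := (ne_of_sub hc (j+1) j 1 (by push_cast; ring) (by norm_num) (by omega)).symm
  simp only [G, map_add, pderiv_two, pderiv_mul, pderiv_pow, pderiv_X_self,
    pderiv_X_of_ne n1, pderiv_X_of_ne n2, pderiv_X_of_ne n3, pderiv_X_of_ne n4]
  ring

lemma sec_p2 (hc : 7 ≤ c) (j : ZMod c) :
    pderiv (j+2) (G j) = 2 * (X (j+1) * X (j+2)) := by
  have n1 : j + 1 ≠ j + 2 := (ne_of_sub hc (j+2) (j+1) 1 (by push_cast; ring) (by norm_num) (by omega)).symm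
  have n2 : j - 1 ≠ j + 2 := (ne_of_sub hc (j+2) (j-1) 3 (by push_cast; ring) (by norm_num) (by omega)).symm
  have n3 : j - 2 ≠ j + 2 := (ne_of_sub hc (j+2) (j-2) 4 (by push_cast; ring) (by norm_num) (by omega)).symm
  have n4 : j ≠ j + 2 := (ne_of_sub hc (j+2) j 2 (by push_cast; ring) (by norm_num) (by omega)).symm
  simp only [G, map_add, pderiv_two, pderiv_mul, pderiv_pow, pderiv_X_self,
    pderiv_X_of_ne n1, pderiv_X_of_ne n2, pderiv_X_of_ne n3, pderiv_X_of_ne n4]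
  ring

lemma sec_0 (hc : 7 ≤ c) (j : ZMod c) :
    pderiv j (G j) = 2 * (X (j-2) * X (j-1)) := by
  have n1 : j + 1 ≠ j := ne_of_sub hc _ _ 1 (by push_cast; ring) (by norm_num) (by omega)
  have n2 : j + 2 ≠ j := ne_of_sub hc _ _ 2 (by push_cast; ring) (by norm_num) (by omega)
  have n3 : j - 1 ≠ j := (ne_of_sub hc j (j-1) 1 (by push_cast; ring) (by norm_num) (by omega)).symm
  have n4 : j - 2 ≠ j := (ne_of_sub hc j (j-2) 2 (by push_cast; ring) (by norm_num) (by omega)).symm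
  simp only [G, map_add, pderiv_two, pderiv_mul, pderiv_pow, pderiv_X_self,
    pderiv_X_of_ne n1, pderiv_X_of_ne n2, pderiv_X_of_ne n3, pderiv_X_of_ne n4]
  ring

lemma sec_m1 (hc : 7 ≤ c) (j : ZMod c) :
    pderiv (j-1) (G j) = X (j+1) ^ 2 + 2 * (X (j-2) * X j) := by
  have n1 : j + 1 ≠ j - 1 := ne_of_sub hc _ _ 2 (by push_cast; ring) (by norm_num) (by omega)
  have n2 : j + 2 ≠ j - 1 := ne_of_sub hc _ _ 3 (by push_cast; ring) (by norm_num) (by omega)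
  have n3 : j - 2 ≠ j - 1 := (ne_of_sub hc (j-1) (j-2) 1 (by push_cast; ring) (by norm_num) (by omega)).symm
  have n4 : j ≠ j - 1 := ne_of_sub hc _ _ 1 (by push_cast; ring) (by norm_num) (by omega)
  simp only [G, map_add, pderiv_two, pderiv_mul, pderiv_pow, pderiv_X_self,
    pderiv_X_of_ne n1, pderiv_X_of_ne n2, pderiv_X_of_ne n3, pderiv_X_of_ne n4]
  ring

lemma sec_m2 (hc : 7 ≤ c) (j : ZMod c) :
    pderiv (j-2) (G j) = 2 * (X (j-1) * X j) := by
  have n1 : j + 1 ≠ j - 2 := ne_of_sub hc _ _ 3 (by push_cast; ring) (by norm_num) (by omega)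
  have n2 : j + 2 ≠ j - 2 := ne_of_sub hc _ _ 4 (by push_cast; ring) (by norm_num) (by omega)
  have n3 : j - 1 ≠ j - 2 := ne_of_sub hc _ _ 1 (by push_cast; ring) (by norm_num) (by omega)
  have n4 : j ≠ j - 2 := ne_of_sub hc _ _ 2 (by push_cast; ring) (by norm_num) (by omega)
  simp only [G, map_add, pderiv_two, pderiv_mul, pderiv_pow, pderiv_X_self,
    pderiv_X_of_ne n1, pderiv_X_of_ne n2, pderiv_X_of_ne n3, pderiv_X_of_ne n4]
  ring

lemma sec_zero (hc : 7 ≤ c) (i j : ZMod c) (h1 : i ≠ j + 1) (h2 : i ≠ j + 2)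
    (h3 : i ≠ j - 1) (h4 : i ≠ j - 2) (h0 : i ≠ j) :
    pderiv i (G j) = 0 := by
  simp only [G, map_add, pderiv_two, pderiv_mul, pderiv_pow,
    pderiv_X_of_ne h1.symm, pderiv_X_of_ne h2.symm, pderiv_X_of_ne h3.symm,
    pderiv_X_of_ne h4.symm, pderiv_X_of_ne h0.symm]
  ring


lemma fs_sq_ne_pair (b d a : ZMod c) (hbd : b ≠ d) :
    Finsupp.single a 2 ≠ Finsupp.single b 1 + Finsupp.single d 1 := by
  intro h
  have h1 := DFunLike.congr_fun h b
  simp only [Finsupp.add_apply, Finsupp.single_apply, if_true, if_neg hbd.symm] at h1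
  split_ifs at h1 <;> omega

lemma fs_sq_eq (i a : ZMod c) (h : Finsupp.single i 2 = Finsupp.single a 2) : i = a := by
  have h1 := DFunLike.congr_fun h i
  simp only [Finsupp.single_apply, if_true] at h1
  split_ifs at h1 with hh
  · exact hh.symm

lemma fs_pair_eq (hc : 7 ≤ c) (i a : ZMod c)
    (h : Finsupp.single i 1 + Finsupp.single (i+1) 1
       = Finsupp.single a 1 + Finsupp.single (a+1) 1) : i = a := by
  have n1 : i + 1 ≠ i := ne_of_sub hc _ _ 1 (by push_cast; ring) (by norm_num) (by omega)
  by_contra hne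
  have hne' : a ≠ i := fun h' => hne h'.symm
  have h1 := DFunLike.congr_fun h i
  simp only [Finsupp.add_apply, Finsupp.single_apply, if_true, if_neg n1, if_neg hne'] at h1
  by_cases ha : a + 1 = i
  · have h2 := DFunLike.congr_fun h (i+1)
    have m1 : a ≠ i + 1 := fun hm =>
      ne_of_sub hc (i+1) (i-1) 2 (by push_cast; ring) (by norm_num) (by omega)
        (by rw [← hm, ← ha]; ring)
    have m2 : a + 1 ≠ i + 1 := fun hm => hne' (by
      have : a + 1 - 1 = i + 1 - 1 := by rw [hm]
      simpa using this)
    simp only [Finsupp.add_apply, Finsupp.single_apply, if_true, if_neg n1.symm, if_neg m1,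
      if_neg m2] at h2
    omega
  · rw [if_neg ha] at h1
    omega

lemma fs_gap2_ne_pair (hc : 7 ≤ c) (i a : ZMod c) :
    Finsupp.single (i-3) 1 + Finsupp.single (i-1) 1
      ≠ Finsupp.single a 1 + Finsupp.single (a+1) 1 := by
  intro h
  have n2 : i - 1 ≠ i - 3 := ne_of_sub hc _ _ 2 (by push_cast; ring) (by norm_num) (by omega)
  have h1 := DFunLike.congr_fun h (i-3)
  have h2 := DFunLike.congr_fun h (i-1)
  simp only [Finsupp.add_apply, Finsupp.single_apply, if_true, if_neg n2, if_neg n2.symm]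
    at h1 h2
  by_cases hA : a = i - 3
  · have m1 : a ≠ i - 1 := fun hm => n2 (hm.symm.trans hA)
    have m2 : a + 1 ≠ i - 1 := fun hm =>
      ne_of_sub hc (i-1) (i-2) 1 (by push_cast; ring) (by norm_num) (by omega)
        (by rw [← hm, hA]; ring)
    simp only [if_neg m1, if_neg m2] at h2
    omega
  · by_cases hB : a + 1 = i - 3
    · have m1 : a ≠ i - 1 := fun hm =>
        ne_of_sub hc (i-1+1) (i-3) 3 (by push_cast; ring) (by norm_num) (by omega)
          (by rw [← hB, hm])
      have m2 : a + 1 ≠ i - 1 := fun hm => n2 (hm.symm.trans hB)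
      simp only [if_neg m1, if_neg m2] at h2
      omega
    · simp only [if_neg hA, if_neg hB] at h1
      omega

/-- the generating family: adjacent products and the `B`-quadrics -/
noncomputable def gg : ZMod c ⊕ ZMod c → MvPolynomial (ZMod c) ℚ
  | Sum.inl i => X i * X (i+1)
  | Sum.inr i => X i ^ 2 + 2 * (X (i-3) * X (i-1))

/-- distinguished monomials -/
noncomputable def mm : ZMod c ⊕ ZMod c → (ZMod c →₀ ℕ)
  | Sum.inl a => Finsupp.single a 1 + Finsupp.single (a+1) 1
  | Sum.inr a => Finsupp.single a 2

lemma XX_eq (a b : ZMod c) : (X a * X b : MvPolynomial (ZMod c) ℚ)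
    = monomial (Finsupp.single a 1 + Finsupp.single b 1) 1 := by
  rw [X, X, monomial_mul, one_mul]

lemma two_XX_eq (a b : ZMod c) : (2 * (X a * X b) : MvPolynomial (ZMod c) ℚ)
    = monomial (Finsupp.single a 1 + Finsupp.single b 1) 2 := by
  rw [XX_eq, show (2 : MvPolynomial (ZMod c) ℚ) = C 2 by rw [map_ofNat], C_mul_monomial, mul_one]

lemma coeff_gg (hc : 7 ≤ c) (t t' : ZMod c ⊕ ZMod c) :
    coeff (mm t) (gg t') = if t' = t then 1 else 0 := by
  have gap13 : ∀ i : ZMod c, i - 3 ≠ i - 1 :=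
    fun i => (ne_of_sub hc (i-1) (i-3) 2 (by push_cast; ring) (by norm_num) (by omega)).symm
  obtain t | t := t <;> obtain t' | t' := t'
  · rw [show gg (Sum.inl t') = X t' * X (t'+1) from rfl, XX_eq, show mm (Sum.inl t) = Finsupp.single t 1 + Finsupp.single (t+1) 1 from rfl, coeff_monomial]
    by_cases h : t' = t
    · subst h; rw [if_pos rfl, if_pos rfl]
    · rw [if_neg (fun he => h (fs_pair_eq hc _ _ he)), if_neg (by simpa using h)]
  · rw [show gg (Sum.inr t') = X t' ^ 2 + 2 * (X (t'-3) * X (t'-1)) from rfl,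
      X_pow_eq_monomial, two_XX_eq,
      show mm (Sum.inl t) = Finsupp.single t 1 + Finsupp.single (t+1) 1 from rfl,
      coeff_add, coeff_monomial, coeff_monomial,
      if_neg (fs_sq_ne_pair t (t+1) t' (ne_of_sub hc (t+1) t 1 (by push_cast; ring)
        (by norm_num) (by omega)).symm),
      if_neg (fs_gap2_ne_pair hc t' t), if_neg (by simp)]
    norm_num
  · rw [show gg (Sum.inl t') = X t' * X (t'+1) from rfl, XX_eq,
      show mm (Sum.inr t) = Finsupp.single t 2 from rfl, coeff_monomial,
      if_neg (fun he => fs_sq_ne_pair t' (t'+1) t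
        (ne_of_sub hc (t'+1) t' 1 (by push_cast; ring) (by norm_num) (by omega)).symm he.symm),
      if_neg (by simp)]
  · rw [show gg (Sum.inr t') = X t' ^ 2 + 2 * (X (t'-3) * X (t'-1)) from rfl,
      X_pow_eq_monomial, two_XX_eq,
      show mm (Sum.inr t) = Finsupp.single t 2 from rfl,
      coeff_add, coeff_monomial, coeff_monomial,
      if_neg (show ¬(Finsupp.single (t'-3) 1 + Finsupp.single (t'-1) 1 = Finsupp.single t 2)
        from fun he => fs_sq_ne_pair (t'-3) (t'-1) t (gap13 t') he.symm)]
    by_cases h : t' = t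
    · subst h; rw [if_pos rfl, if_pos rfl]; norm_num
    · rw [if_neg (fun he => h (fs_sq_eq _ _ he)), if_neg (by simpa using h)]
      norm_num

lemma gg_indep (hc : 7 ≤ c) : LinearIndependent ℚ (gg : ZMod c ⊕ ZMod c → MvPolynomial (ZMod c) ℚ) := by
  classical
  let Φ : MvPolynomial (ZMod c) ℚ →ₗ[ℚ] (ZMod c ⊕ ZMod c → ℚ) :=
    LinearMap.pi fun t => lcoeff ℚ (mm t)
  apply LinearIndependent.of_comp Φ
  have hcomp : (Φ ∘ gg) = fun t' => Pi.single t' (1 : ℚ) := by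
    funext t'
    funext t
    simp only [Function.comp_apply, Φ, LinearMap.pi_apply, lcoeff_apply, coeff_gg hc,
      Pi.single_apply]
    exact if_congr eq_comm rfl rfl
  rw [hcomp, show (fun t' : ZMod c ⊕ ZMod c => Pi.single t' (1:ℚ))
      = ⇑(Pi.basisFun ℚ (ZMod c ⊕ ZMod c)) from funext fun i => (Pi.basisFun_apply _ _ _).symm]
  exact (Pi.basisFun ℚ _).linearIndependent

lemma two_mul_eq_smul (p : MvPolynomial (ZMod c) ℚ) : 2 * p = (2:ℚ) • p := by
  rw [MvPolynomial.smul_eq_C_mul, map_ofNat]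

end

/-- Let `c ≥ 7` and `F = Σ_k x_k x_{k+1} x_{k+2}²` in `ℚ[x_i : i ∈ ℤ/cℤ]`.  The
`ℚ`-linear span of the second partial derivatives `∂_i ∂_j F` has dimension exactly
`2c` (the statement `h₂ = 2c` for the `h`-vector `(1, c, 2c, c, 1)` of `S/Ann(F)`). -/
theorem span_second_partials_finrank (c : ℕ) (hc : 7 ≤ c) [NeZero c]
    (F : MvPolynomial (ZMod c) ℚ)
    (hF : F = ∑ k : ZMod c, X k * X (k + 1) * X (k + 2) ^ 2) :
    Module.finrank ℚ
      (Submodule.span ℚ {p : MvPolynomial (ZMod c) ℚ |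
        ∃ i j : ZMod c, p = pderiv i (pderiv j F)}) = 2 * c := by
  have hfd : ∀ j : ZMod c, pderiv j F = G j := by
    intro j; rw [hF, first_deriv hc j]; rfl
  have hspan : Submodule.span ℚ {p : MvPolynomial (ZMod c) ℚ |
        ∃ i j : ZMod c, p = pderiv i (pderiv j F)}
      = Submodule.span ℚ (Set.range gg) := by
    apply le_antisymm
    · rw [Submodule.span_le]
      rintro p ⟨i, j, rfl⟩
      rw [hfd j]
      by_cases h1 : i = j + 1
      · subst h1; rw [sec_p1 hc j]
        exact Submodule.subset_span ⟨Sum.inr (j+2), by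
          rw [show gg (Sum.inr (j+2)) = X (j+2)^2 + 2*(X (j+2-3) * X (j+2-1)) from rfl,
            show j+2-3 = j-1 from by ring, show j+2-1 = j+1 from by ring]⟩
      · by_cases h2 : i = j + 2
        · subst h2; rw [sec_p2 hc j, two_mul_eq_smul]
          exact Submodule.smul_mem _ _ (Submodule.subset_span ⟨Sum.inl (j+1), by
            rw [show gg (Sum.inl (j+1)) = X (j+1) * X (j+1+1) from rfl,
              show j+1+1 = j+2 from by ring]⟩)
        · by_cases h3 : i = j - 1
          · subst h3; rw [sec_m1 hc j]
            exact Submodule.subset_span ⟨Sum.inr (j+1), by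
              rw [show gg (Sum.inr (j+1)) = X (j+1)^2 + 2*(X (j+1-3) * X (j+1-1)) from rfl,
                show j+1-3 = j-2 from by ring, show j+1-1 = j from by ring]⟩
          · by_cases h4 : i = j - 2
            · subst h4; rw [sec_m2 hc j, two_mul_eq_smul]
              exact Submodule.smul_mem _ _ (Submodule.subset_span ⟨Sum.inl (j-1), by
                rw [show gg (Sum.inl (j-1)) = X (j-1) * X (j-1+1) from rfl,
                  show j-1+1 = j from by ring]⟩)
            · by_cases h0 : i = j
              · rw [h0, sec_0 hc j, two_mul_eq_smul]
                exact Submodule.smul_mem _ _ (Submodule.subset_span ⟨Sum.inl (j-2), by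
                  rw [show gg (Sum.inl (j-2)) = X (j-2) * X (j-2+1) from rfl,
                    show j-2+1 = j-1 from by ring]⟩)
              · rw [sec_zero hc i j h1 h2 h3 h4 h0]
                exact Submodule.zero_mem _
    · rw [Submodule.span_le]
      rintro p ⟨t, rfl⟩
      obtain i | i := t
      · have hmem : pderiv (i+1) (pderiv (i-1) F) ∈ Submodule.span ℚ
            {p : MvPolynomial (ZMod c) ℚ | ∃ a b : ZMod c, p = pderiv a (pderiv b F)} :=
          Submodule.subset_span ⟨i+1, i-1, rfl⟩
        have heq : pderiv (i+1) (pderiv (i-1) F) = 2 * gg (Sum.inl i) := by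
          rw [hfd, show i + 1 = (i-1) + 2 from by ring, sec_p2 hc (i-1),
            show i - 1 + 1 = i from by ring, show i - 1 + 2 = i + 1 from by ring]
          rfl
        have hg : gg (Sum.inl i) = (2:ℚ)⁻¹ • (pderiv (i+1) (pderiv (i-1) F)) := by
          rw [heq, two_mul_eq_smul, smul_smul]
          norm_num
        rw [hg]
        exact Submodule.smul_mem _ _ hmem
      · refine Submodule.subset_span ⟨i-1, i-2, ?_⟩
        rw [hfd, show i - 1 = (i-2) + 1 from by ring, sec_p1 hc (i-2),
          show i - 2 + 2 = i from by ring, show i - 2 - 1 = i - 3 from by ring,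
          show i - 2 + 1 = i - 1 from by ring]
        rfl
  rw [hspan, finrank_span_eq_card (gg_indep hc), Fintype.card_sum, ZMod.card]
  ring
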